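/- Let d ≥ 1, σ ≥ 2, c ≠ 0, and let f : ℝ^d → ℝ be three times continuously differentiable with gradient ∇f. Fix t > 0 and suppose q, p : I → ℝ^d is a sufficiently smooth (C³) solution, on an open interval I containing t, of the reduced Hamiltonian system (d/ds)qᵃ(s) = −pₐ(s)/(c s^{2σ+1}), (d/ds)pₐ(s) = σ² c s^{3σ−1} (∂f/∂qᵃ)(q(s)). For τ > 0 define the one-step Strang-splitting update (q″(τ), p″(τ)) by: q₁ = q(t) + (1/(2σc)) [(t+τ/2)^{−2σ} − t^{−2σ}] · p(t); p″ = p(t) + (σc/3) [(t+τ)^{3σ} − t^{3σ}] · ∇f(q₁); q″ = q₁ + (1/(2σc)) [(t+τ)^{−2σ} − (t+τ/2)^{−2σ}] · p″. Then the local error satisfies ‖(q(t+τ), p(t+τ)) − (q″(τ), p″(τ))‖ = O(τ³) as τ → 0⁺. -/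

import Mathlib

/-!
Write `K' = -1/p₀` and `V' = p₀ Γ₀`, so that the reduced system reads `q̇ = K'(s) p`,
`ṗ = V'(s) ∇f(q)` and the sub-flows of `H_K^Z` and `H_V^Z` are shears whose coefficients are
increments of `K` and `V`. Differentiating the system once more gives the second-order Taylor
expansions of `q(t + τ)` and `p(t + τ)`. Expanding `K`, `V` and `∇f(q₁)` to the orders needed shows
that the Strang step reproduces both, and every term left over is a product of factors whose
orders add up to at least three. All expansions rest on the mean value inequality: a function
vanishing at `0` whose derivative is `O(τⁿ)` is `O(τⁿ⁺¹)`.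
-/

/-- Intermediate position of the Strang-splitting step (exact flow of `H_K^Z`
over the half step): `q₁ = q(t) + (1/(2σc)) [(t+τ/2)^(-2σ) - t^(-2σ)] p(t)`. -/
noncomputable def si2Q1 (d : ℕ) (σ c t : ℝ) (q p : ℝ → Fin d → ℝ) (τ : ℝ) :
    Fin d → ℝ :=
  fun a => q t a
    + 1 / (2 * σ * c) * ((t + τ / 2) ^ (-(2 * σ)) - t ^ (-(2 * σ))) * p t a

/-- Momentum update of the Strang-splitting step (exact flow of `H_V^Z` over the
full step, evaluated at `q₁`):
`p″ = p(t) + (σc/3) [(t+τ)^(3σ) - t^(3σ)] ∇f(q₁)`. -/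
noncomputable def si2P (d : ℕ) (σ c t : ℝ) (f : (Fin d → ℝ) → ℝ)
    (q p : ℝ → Fin d → ℝ) (τ : ℝ) : Fin d → ℝ :=
  fun a => p t a
    + σ * c / 3 * ((t + τ) ^ (3 * σ) - t ^ (3 * σ)) *
      deriv (fun s : ℝ => f (Function.update (si2Q1 d σ c t q p τ) a s))
        (si2Q1 d σ c t q p τ a)

/-- Final position of the Strang-splitting step (exact flow of `H_K^Z` over the
second half step): `q″ = q₁ + (1/(2σc)) [(t+τ)^(-2σ) - (t+τ/2)^(-2σ)] p″`. -/
noncomputable def si2Q (d : ℕ) (σ c t : ℝ) (f : (Fin d → ℝ) → ℝ)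
    (q p : ℝ → Fin d → ℝ) (τ : ℝ) : Fin d → ℝ :=
  fun a => si2Q1 d σ c t q p τ a
    + 1 / (2 * σ * c) * ((t + τ) ^ (-(2 * σ)) - (t + τ / 2) ^ (-(2 * σ))) *
      si2P d σ c t f q p τ a

open Asymptotics Filter Topology

section Taylor

variable {F : Type*} [NormedAddCommGroup F] [NormedSpace ℝ F]

theorem isBigO_pow_succ_of_hasDerivAt {φ φ' : ℝ → F} {n : ℕ} (h0 : φ 0 = 0)
    (hφ : ∀ᶠ s in 𝓝 0, HasDerivAt φ (φ' s) s) (hφ' : φ' =O[𝓝 0] (· ^ n)) :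
    φ =O[𝓝 0] (· ^ (n + 1)) := by
  have hfderiv : fderiv ℝ φ =O[𝓝 0] (‖· - 0‖ ^ (n : ℝ)) := by
    refine (IsBigO.of_bound 1 ?_).trans (hφ'.trans (IsBigO.of_bound 1 ?_))
    · filter_upwards [hφ] with s hs
      rw [← norm_deriv_eq_norm_fderiv, hs.deriv, one_mul]
    · filter_upwards with s
      simp
  have h := sub_isBigO_norm_rpow_add_one_of_fderiv (Nat.cast_nonneg n)
    (hφ.mono fun s hs => hs.differentiableAt) hfderiv
  norm_cast at h
  simpa [h0, ← abs_pow, isBigO_abs_right] using h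

theorem eventually_hasDerivAt_comp_const_add {φ φ' : ℝ → F} {x : ℝ}
    (hφ : ∀ᶠ s in 𝓝 x, HasDerivAt φ (φ' s) s) :
    ∀ᶠ h in 𝓝 0, HasDerivAt (fun h => φ (x + h)) (φ' (x + h)) h := by
  have hx : Tendsto (x + ·) (𝓝 0) (𝓝 x) := by
    simpa using (continuous_const_add x).tendsto 0
  exact (hx.eventually hφ).mono fun h hh => hh.comp_const_add x h

theorem isBigO_sq_sub_taylor₁ {φ φ' : ℝ → F} {x : ℝ}
    (hφ : ∀ᶠ s in 𝓝 x, HasDerivAt φ (φ' s) s) (hφ' : DifferentiableAt ℝ φ' x) :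
    (fun h => φ (x + h) - φ x - h • φ' x) =O[𝓝 0] (· ^ 2) := by
  have hx : Tendsto (x + ·) (𝓝 0) (𝓝 x) := by
    simpa using (continuous_const_add x).tendsto 0
  have hφ'_sub : (fun h => φ' (x + h) - φ' x) =O[𝓝 0] (· ^ 1) := by
    simpa [Function.comp_def] using hφ'.isBigO_sub.comp_tendsto hx
  refine isBigO_pow_succ_of_hasDerivAt (by simp) ?_ hφ'_sub
  filter_upwards [eventually_hasDerivAt_comp_const_add hφ] with h hh
  exact ((hh.sub_const (φ x)).sub ((hasDerivAt_id' h).smul_const (φ' x))).congr_deriv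
    (by simp)

theorem isBigO_cube_sub_taylor₂ {φ φ' φ'' : ℝ → F} {x : ℝ}
    (hφ : ∀ᶠ s in 𝓝 x, HasDerivAt φ (φ' s) s) (hφ' : ∀ᶠ s in 𝓝 x, HasDerivAt φ' (φ'' s) s)
    (hφ'' : DifferentiableAt ℝ φ'' x) :
    (fun h => φ (x + h) - φ x - h • φ' x - (h ^ 2 / 2) • φ'' x) =O[𝓝 0] (· ^ 3) := by
  refine isBigO_pow_succ_of_hasDerivAt (by simp) ?_ (isBigO_sq_sub_taylor₁ hφ' hφ'')
  filter_upwards [eventually_hasDerivAt_comp_const_add hφ] with h hh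
  have hsq : HasDerivAt (fun h : ℝ => h ^ 2 / 2) h h := by
    simpa using (hasDerivAt_pow 2 h).div_const 2
  exact (((hh.sub_const (φ x)).sub ((hasDerivAt_id' h).smul_const (φ' x))).sub
    (hsq.smul_const (φ'' x))).congr_deriv (by simp)

theorem eventually_hasDerivAt_comp_const_add_half {φ φ' : ℝ → ℝ} {x : ℝ}
    (hφ : ∀ᶠ s in 𝓝 x, HasDerivAt φ (φ' s) s) :
    ∀ᶠ h in 𝓝 0, HasDerivAt (fun h => φ (x + h / 2)) (φ' (x + h / 2) / 2) h := by
  have hx : Tendsto (fun h : ℝ => x + h / 2) (𝓝 0) (𝓝 x) := by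
    simpa [Function.comp_def] using
      ((continuous_const_add x).comp (continuous_id.div_const 2)).tendsto 0
  exact (hx.eventually hφ).mono fun h hh =>
    (hh.comp h (((hasDerivAt_id h).div_const 2).const_add x)).congr_deriv (by ring)

theorem ContDiffAt.eventually_hasDerivAt {φ : ℝ → F} {x : ℝ} (hφ : ContDiffAt ℝ 1 φ x) :
    ∀ᶠ y in 𝓝 x, HasDerivAt φ (deriv φ y) y :=
  (hφ.eventually (by simp)).mono fun _ hy => (hy.differentiableAt one_ne_zero).hasDerivAt

theorem ContDiffAt.isBigO_sq_sub_taylor₁ {φ : ℝ → F} {x : ℝ} (hφ : ContDiffAt ℝ 2 φ x) :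
    (fun h => φ (x + h) - φ x - h • deriv φ x) =O[𝓝 0] (· ^ 2) :=
  _root_.isBigO_sq_sub_taylor₁ (hφ.of_le (by norm_num)).eventually_hasDerivAt
    ((hφ.derivWithin (m := 1) (by norm_num)).differentiableAt one_ne_zero)

theorem ContDiffAt.isBigO_cube_sub_taylor₂ {φ : ℝ → F} {x : ℝ} (hφ : ContDiffAt ℝ 3 φ x) :
    (fun h => φ (x + h) - φ x - h • deriv φ x - (h ^ 2 / 2) • deriv (deriv φ) x)
      =O[𝓝 0] (· ^ 3) :=
  have hφ' : ContDiffAt ℝ 2 (deriv φ) x := hφ.derivWithin (by norm_num)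
  _root_.isBigO_cube_sub_taylor₂ (hφ.of_le (by norm_num)).eventually_hasDerivAt
    (hφ'.of_le (by norm_num)).eventually_hasDerivAt
    ((hφ'.derivWithin (m := 1) (by norm_num)).differentiableAt one_ne_zero)

theorem isBigO_pow_smul_const (n : ℕ) (w : F) : (fun h : ℝ => h ^ n • w) =O[𝓝 0] (· ^ n) :=
  IsBigO.of_bound ‖w‖ (Eventually.of_forall fun h => by rw [norm_smul, mul_comm])

theorem Asymptotics.IsBigO.smul_pow {k : ℝ → ℝ} {f : ℝ → F} {m n : ℕ}
    (hk : k =O[𝓝 0] (· ^ m)) (hf : f =O[𝓝 0] (· ^ n)) :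
    (fun h => k h • f h) =O[𝓝 0] (· ^ (m + n)) :=
  (hk.smul hf).congr_right fun h => by simp [pow_add]

theorem isBigO_cube_mul_sub {u w : ℝ → ℝ} {a b : ℝ}
    (hu : (fun h => u h - h * a) =O[𝓝 0] (· ^ 2)) (hw : (fun h => w h - h * b) =O[𝓝 0] (· ^ 2)) :
    (fun h => u h * w h - h ^ 2 * (a * b)) =O[𝓝 0] (· ^ 3) := by
  have hlin (c : ℝ) : (fun h : ℝ => h * c) =O[𝓝 0] (· ^ 1) :=
    (isBigO_pow_smul_const 1 c).congr_left fun h => by simp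
  have hw₁ : w =O[𝓝 0] (· ^ 1) :=
    ((hw.trans (isLittleO_pow_pow one_lt_two).isBigO).add (hlin b)).congr_left fun h => by ring
  exact ((hu.smul_pow hw₁).add ((hlin a).smul_pow hw)).congr_left fun h => by
    simp only [smul_eq_mul]; ring

end Taylor

section Strang

variable {E : Type*} [NormedAddCommGroup E] [NormedSpace ℝ E]

-- The Strang step for `q̇ = K'(s) p`, `ṗ = V'(s) g(q)`: both sub-flows are exact shears, with
-- coefficients the increments of the primitives `K` and `V`.
noncomputable def strangQ₁ (K : ℝ → ℝ) (q₀ p₀ : E) (t τ : ℝ) : E :=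
  q₀ + (K (t + τ / 2) - K t) • p₀

noncomputable def strangP (K V : ℝ → ℝ) (g : E → E) (q₀ p₀ : E) (t τ : ℝ) : E :=
  p₀ + (V (t + τ) - V t) • g (strangQ₁ K q₀ p₀ t τ)

noncomputable def strangQ (K V : ℝ → ℝ) (g : E → E) (q₀ p₀ : E) (t τ : ℝ) : E :=
  strangQ₁ K q₀ p₀ t τ + (K (t + τ) - K (t + τ / 2)) • strangP K V g q₀ p₀ t τ

variable {K V : ℝ → ℝ} {g : E → E} {q p : ℝ → E} {t : ℝ}

theorem isBigO_cube_position_sub_taylor (hK : ContDiffAt ℝ 3 K t) (hV : ContDiffAt ℝ 2 V t)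
    (hg : ContDiffAt ℝ 1 g (q t)) (hq : ∀ᶠ s in 𝓝 t, HasDerivAt q (deriv K s • p s) s)
    (hp : ∀ᶠ s in 𝓝 t, HasDerivAt p (deriv V s • g (q s)) s) :
    (fun h => q (t + h) - q t - h • (deriv K t • p t)
      - (h ^ 2 / 2) • (deriv K t • (deriv V t • g (q t)) + deriv (deriv K) t • p t))
      =O[𝓝 0] (· ^ 3) := by
  have hK' : ContDiffAt ℝ 2 (deriv K) t := hK.derivWithin (by norm_num)
  have hgq : DifferentiableAt ℝ (fun s => g (q s)) t :=
    (hg.differentiableAt one_ne_zero).comp t hq.self_of_nhds.differentiableAt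
  refine isBigO_cube_sub_taylor₂ (φ'' := fun s => deriv K s • (deriv V s • g (q s))
    + deriv (deriv K) s • p s) hq ?_ ?_
  · filter_upwards [(hK'.of_le (by norm_num)).eventually_hasDerivAt, hp] with s hk hps
    exact hk.smul hps
  · have hk₂ := (hK'.derivWithin (m := 1) (by norm_num)).differentiableAt one_ne_zero
    have hv := (hV.derivWithin (m := 1) (by norm_num)).differentiableAt one_ne_zero
    exact ((hK'.differentiableAt (by norm_num)).smul (hv.smul hgq)).add
      (hk₂.smul hp.self_of_nhds.differentiableAt)

theorem isBigO_cube_momentum_sub_taylor (hK : ContDiffAt ℝ 2 K t) (hV : ContDiffAt ℝ 3 V t)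
    (hg : ContDiffAt ℝ 2 g (q t)) (hq : ∀ᶠ s in 𝓝 t, HasDerivAt q (deriv K s • p s) s)
    (hp : ∀ᶠ s in 𝓝 t, HasDerivAt p (deriv V s • g (q s)) s) :
    (fun h => p (t + h) - p t - h • (deriv V t • g (q t))
      - (h ^ 2 / 2) • (deriv V t • fderiv ℝ g (q t) (deriv K t • p t)
        + deriv (deriv V) t • g (q t)))
      =O[𝓝 0] (· ^ 3) := by
  have hV' : ContDiffAt ℝ 2 (deriv V) t := hV.derivWithin (by norm_num)
  have hgq : ∀ᶠ s in 𝓝 t,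
      HasDerivAt (fun s => g (q s)) (fderiv ℝ g (q s) (deriv K s • p s)) s := by
    have hg' := hq.self_of_nhds.continuousAt.tendsto.eventually (hg.eventually (by simp))
    filter_upwards [hg', hq] with s hgs hqs
    exact (hgs.differentiableAt (by norm_num)).hasFDerivAt.comp_hasDerivAt s hqs
  refine isBigO_cube_sub_taylor₂ (φ'' := fun s => deriv V s • fderiv ℝ g (q s) (deriv K s • p s)
    + deriv (deriv V) s • g (q s)) hp ?_ ?_
  · filter_upwards [(hV'.of_le (by norm_num)).eventually_hasDerivAt, hgq] with s hv hgqs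
    exact hv.smul hgqs
  · have hv₂ := (hV'.derivWithin (m := 1) (by norm_num)).differentiableAt one_ne_zero
    have hDg := ((hg.fderiv_right (m := 1) (by norm_num)).differentiableAt one_ne_zero).comp t
      hq.self_of_nhds.differentiableAt
    have hk := (hK.derivWithin (m := 1) (by norm_num)).differentiableAt one_ne_zero
    exact ((hV'.differentiableAt (by norm_num)).smul
      (hDg.clm_apply (hk.smul hp.self_of_nhds.differentiableAt))).add
      (hv₂.smul hgq.self_of_nhds.differentiableAt)

theorem isBigO_sq_comp_strangQ₁_sub_taylor {q₀ : E} (p₀ : E) (hK : ContDiffAt ℝ 2 K t)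
    (hg : ContDiffAt ℝ 2 g q₀) :
    (fun h => g (strangQ₁ K q₀ p₀ t h) - g q₀ - h • fderiv ℝ g q₀ ((deriv K t / 2) • p₀))
      =O[𝓝 0] (· ^ 2) := by
  have hQ₁ : ∀ᶠ h in 𝓝 0,
      HasDerivAt (strangQ₁ K q₀ p₀ t) ((deriv K (t + h / 2) / 2) • p₀) h := by
    filter_upwards [eventually_hasDerivAt_comp_const_add_half
      (hK.of_le (by norm_num)).eventually_hasDerivAt] with h hh
    exact ((hh.sub_const (K t)).smul_const p₀).const_add q₀
  have hQ₁_zero : strangQ₁ K q₀ p₀ t 0 = q₀ := by simp [strangQ₁]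
  have hgQ₁ : ∀ᶠ h in 𝓝 0,
      HasFDerivAt g (fderiv ℝ g (strangQ₁ K q₀ p₀ t h)) (strangQ₁ K q₀ p₀ t h) := by
    rw [← hQ₁_zero] at hg
    exact hQ₁.self_of_nhds.continuousAt.tendsto.eventually ((hg.eventually (by simp)).mono
      fun y hy => (hy.differentiableAt (by norm_num)).hasFDerivAt)
  have hderiv : DifferentiableAt ℝ
      (fun h => fderiv ℝ g (strangQ₁ K q₀ p₀ t h) ((deriv K (t + h / 2) / 2) • p₀)) 0 := by
    have hDg := (hg.fderiv_right (m := 1) (by norm_num)).differentiableAt one_ne_zero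
    have hk := (hK.derivWithin (m := 1) (by norm_num)).differentiableAt one_ne_zero
    have hk_half : DifferentiableAt ℝ (fun h => deriv K (t + h / 2)) 0 :=
      DifferentiableAt.comp (g := deriv K) 0 (by simpa using hk) (by fun_prop)
    exact (DifferentiableAt.comp 0 (by rwa [hQ₁_zero]) hQ₁.self_of_nhds.differentiableAt).clm_apply
      ((hk_half.div_const 2).smul_const p₀)
  simpa [hQ₁_zero] using isBigO_sq_sub_taylor₁ (x := 0)
    ((hgQ₁.and hQ₁).mono fun h hh => hh.1.comp_hasDerivAt h hh.2) hderiv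

theorem isBigO_comp_strangQ₁_sub {q₀ : E} (p₀ : E) (hK : ContDiffAt ℝ 2 K t)
    (hg : ContDiffAt ℝ 2 g q₀) :
    (fun h => g (strangQ₁ K q₀ p₀ t h) - g q₀) =O[𝓝 0] (· ^ 1) :=
  (((isBigO_sq_comp_strangQ₁_sub_taylor p₀ hK hg).trans (isLittleO_pow_pow one_lt_two).isBigO).add
    (isBigO_pow_smul_const 1 (fderiv ℝ g q₀ ((deriv K t / 2) • p₀)))).congr_left
    fun h => by simp

theorem isBigO_comp_strangQ₁ {q₀ : E} (p₀ : E) (hK : ContDiffAt ℝ 2 K t)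
    (hg : ContDiffAt ℝ 2 g q₀) :
    (fun h => g (strangQ₁ K q₀ p₀ t h)) =O[𝓝 0] (· ^ 0) :=
  (((isBigO_comp_strangQ₁_sub p₀ hK hg).trans (isLittleO_pow_pow zero_lt_one).isBigO).add
    (isBigO_pow_smul_const 0 (g q₀))).congr_left fun h => by simp

theorem isBigO_cube_half_step_mul_sub (hK : ContDiffAt ℝ 2 K t) (hV : ContDiffAt ℝ 2 V t) :
    (fun h => (K (t + h) - K (t + h / 2)) * (V (t + h) - V t)
      - h ^ 2 * (deriv K t / 2 * deriv V t)) =O[𝓝 0] (· ^ 3) := by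
  have hK₁ := (hK.of_le (by norm_num)).eventually_hasDerivAt
  have hk := (hK.derivWithin (m := 1) (by norm_num)).differentiableAt one_ne_zero
  have hA₂ : ∀ᶠ h in 𝓝 0, HasDerivAt (fun h => K (t + h) - K (t + h / 2))
      (deriv K (t + h) - deriv K (t + h / 2) / 2) h := by
    filter_upwards [eventually_hasDerivAt_comp_const_add hK₁,
      eventually_hasDerivAt_comp_const_add_half hK₁] with h h₁ h₂
    exact h₁.sub h₂
  have hA₂' : DifferentiableAt ℝ (fun h => deriv K (t + h) - deriv K (t + h / 2) / 2) 0 :=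
    (DifferentiableAt.comp (g := deriv K) 0 (by simpa using hk) (by fun_prop)).sub
      ((DifferentiableAt.comp (g := deriv K) 0 (by simpa using hk) (by fun_prop)).div_const 2)
  refine isBigO_cube_mul_sub ?_ (by simpa using hV.isBigO_sq_sub_taylor₁)
  simpa [sub_half] using isBigO_sq_sub_taylor₁ hA₂ hA₂'

theorem isBigO_cube_momentum_sub_strangP (hK : ContDiffAt ℝ 3 K t) (hV : ContDiffAt ℝ 3 V t)
    (hg : ContDiffAt ℝ 2 g (q t)) (hq : ∀ᶠ s in 𝓝 t, HasDerivAt q (deriv K s • p s) s)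
    (hp : ∀ᶠ s in 𝓝 t, HasDerivAt p (deriv V s • g (q s)) s) :
    (fun τ => p (t + τ) - strangP K V g (q t) (p t) t τ) =O[𝓝 0] (· ^ 3) := by
  have hK₂ : ContDiffAt ℝ 2 K t := hK.of_le (by norm_num)
  have hlin : (fun h => h * deriv V t + h ^ 2 / 2 * deriv (deriv V) t) =O[𝓝 0] (· ^ 1) :=
    ((isBigO_pow_smul_const 1 (deriv V t)).add ((isBigO_pow_smul_const 2
      (deriv (deriv V) t / 2)).trans (isLittleO_pow_pow one_lt_two).isBigO)).congr_left
      fun h => by simp only [smul_eq_mul]; ring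
  -- With `G τ = g (q₁ τ)` and `R_p`, `R_V`, `R_G` the remainders of the expansions of `p`, `V`
  -- and `G`, the error is `R_p - R_V • G - (τ v + τ² v₂ / 2) • R_G - τ³ (v₂ / 2) • Dg (k/2 • p₀)`.
  refine ((((isBigO_cube_momentum_sub_taylor hK₂ hV hg hq hp).sub
    (hV.isBigO_cube_sub_taylor₂.smul_pow (isBigO_comp_strangQ₁ (p t) hK₂ hg))).sub
    (hlin.smul_pow (isBigO_sq_comp_strangQ₁_sub_taylor (p t) hK₂ hg))).sub
    (isBigO_pow_smul_const 3 ((deriv (deriv V) t / 2) •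
      fderiv ℝ g (q t) ((deriv K t / 2) • p t)))).congr_left fun h => ?_
  simp only [strangP, map_smul, smul_eq_mul]
  module

theorem isBigO_cube_position_sub_strangQ (hK : ContDiffAt ℝ 3 K t) (hV : ContDiffAt ℝ 2 V t)
    (hg : ContDiffAt ℝ 2 g (q t)) (hq : ∀ᶠ s in 𝓝 t, HasDerivAt q (deriv K s • p s) s)
    (hp : ∀ᶠ s in 𝓝 t, HasDerivAt p (deriv V s • g (q s)) s) :
    (fun τ => q (t + τ) - strangQ K V g (q t) (p t) t τ) =O[𝓝 0] (· ^ 3) := by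
  have hK₂ : ContDiffAt ℝ 2 K t := hK.of_le (by norm_num)
  -- With `A₂ = K (t + τ) - K (t + τ/2)`, `B = V (t + τ) - V t`, `G τ = g (q₁ τ)` and `R_q`, `R_K`
  -- the remainders of the expansions of `q` and `K`, the error is
  -- `R_q - R_K • p₀ - (A₂ B - τ² k v / 2) • G - (τ² k v / 2) • (G - g q₀)`.
  refine ((((isBigO_cube_position_sub_taylor hK hV (hg.of_le (by norm_num)) hq hp).sub
    (hK.isBigO_cube_sub_taylor₂.smul_pow (isBigO_pow_smul_const 0 (p t)))).sub
    ((isBigO_cube_half_step_mul_sub hK₂ hV).smul_pow (isBigO_comp_strangQ₁ (p t) hK₂ hg))).sub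
    ((isBigO_pow_smul_const 2 (deriv K t / 2 * deriv V t)).smul_pow
      (isBigO_comp_strangQ₁_sub (p t) hK₂ hg))).congr_left fun h => ?_
  simp only [strangQ, strangP, strangQ₁, smul_eq_mul, pow_zero, one_smul]
  module

theorem isBigO_strang_local_error (hK : ContDiffAt ℝ 3 K t) (hV : ContDiffAt ℝ 3 V t)
    (hg : ContDiffAt ℝ 2 g (q t)) (hq : ∀ᶠ s in 𝓝 t, HasDerivAt q (deriv K s • p s) s)
    (hp : ∀ᶠ s in 𝓝 t, HasDerivAt p (deriv V s • g (q s)) s) :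
    (fun τ => (q (t + τ) - strangQ K V g (q t) (p t) t τ,
      p (t + τ) - strangP K V g (q t) (p t) t τ)) =O[𝓝 0] (· ^ 3) :=
  (isBigO_cube_position_sub_strangQ hK (hV.of_le (by norm_num)) hg hq hp).prod_left
    (isBigO_cube_momentum_sub_strangP hK hV hg hq hp)

end Strang

section Zhang

-- `Fin d → ℝ` carries the sup norm, so the gradient is assembled from partial derivatives
-- rather than taken from `gradient`, which needs an inner product space.
noncomputable def coordGradient {ι : Type*} [Fintype ι] [DecidableEq ι] (f : (ι → ℝ) → ℝ)
    (x : ι → ℝ) : ι → ℝ :=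
  fun a => fderiv ℝ f x (Pi.single a 1)

theorem deriv_comp_update_eq_coordGradient {ι : Type*} [Fintype ι] [DecidableEq ι]
    {f : (ι → ℝ) → ℝ} {x : ι → ℝ} (hf : DifferentiableAt ℝ f x) (a : ι) :
    deriv (fun r => f (Function.update x a r)) (x a) = coordGradient f x a :=
  (hf.hasFDerivAt.comp_hasDerivAt_of_eq (x a) (hasDerivAt_update x a (x a))
    (Function.update_eq_self a x).symm).deriv

theorem ContDiff.coordGradient {ι : Type*} [Fintype ι] [DecidableEq ι] {f : (ι → ℝ) → ℝ}
    {n : ℕ} (hf : ContDiff ℝ (n + 1) f) : ContDiff ℝ n (coordGradient f) :=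
  contDiff_pi.mpr fun _ => (hf.fderiv_right le_rfl).clm_apply contDiff_const

-- Primitives of the coefficients `-1 / p₀(s) = -1 / (c s^(2σ+1))` and
-- `p₀(s) Γ₀(s) = σ² c s^(3σ-1)` of the reduced system.
noncomputable def zhangK (σ c s : ℝ) : ℝ := 1 / (2 * σ * c) * s ^ (-(2 * σ))

noncomputable def zhangV (σ c s : ℝ) : ℝ := σ * c / 3 * s ^ (3 * σ)

variable {σ c s : ℝ}

theorem hasDerivAt_zhangK (hσ : σ ≠ 0) (hs : 0 < s) :
    HasDerivAt (zhangK σ c) (-(c * s ^ (2 * σ + 1))⁻¹) s := by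
  refine ((Real.hasDerivAt_rpow_const (p := -(2 * σ)) (Or.inl hs.ne')).const_mul _).congr_deriv ?_
  rw [show -(2 * σ) - 1 = -(2 * σ + 1) by ring, Real.rpow_neg hs.le, mul_inv]
  field_simp

theorem hasDerivAt_zhangV (hs : 0 < s) :
    HasDerivAt (zhangV σ c) (σ ^ 2 * c * s ^ (3 * σ - 1)) s :=
  ((Real.hasDerivAt_rpow_const (p := 3 * σ) (Or.inl hs.ne')).const_mul _).congr_deriv (by ring)

theorem contDiffAt_zhangK {n : WithTop ℕ∞} (hs : 0 < s) : ContDiffAt ℝ n (zhangK σ c) s :=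
  contDiffAt_const.mul (Real.contDiffAt_rpow_const_of_ne hs.ne')

theorem contDiffAt_zhangV {n : WithTop ℕ∞} (hs : 0 < s) : ContDiffAt ℝ n (zhangV σ c) s :=
  contDiffAt_const.mul (Real.contDiffAt_rpow_const_of_ne hs.ne')

variable {d : ℕ} {f : (Fin d → ℝ) → ℝ} {q p : ℝ → Fin d → ℝ} {t τ : ℝ}

theorem si2Q1_eq_strangQ₁ :
    si2Q1 d σ c t q p τ = strangQ₁ (zhangK σ c) (q t) (p t) t τ := by
  funext a
  simp only [si2Q1, strangQ₁, zhangK, Pi.add_apply, Pi.smul_apply, smul_eq_mul]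
  ring

theorem si2P_eq_strangP (hf : Differentiable ℝ f) :
    si2P d σ c t f q p τ
      = strangP (zhangK σ c) (zhangV σ c) (coordGradient f) (q t) (p t) t τ := by
  funext a
  simp only [si2P, strangP, ← si2Q1_eq_strangQ₁, deriv_comp_update_eq_coordGradient (hf _),
    zhangV, Pi.add_apply, Pi.smul_apply, smul_eq_mul]
  ring

theorem si2Q_eq_strangQ (hf : Differentiable ℝ f) :
    si2Q d σ c t f q p τ
      = strangQ (zhangK σ c) (zhangV σ c) (coordGradient f) (q t) (p t) t τ := by
  funext a
  simp only [si2Q, strangQ, ← si2Q1_eq_strangQ₁, ← si2P_eq_strangP hf, zhangK,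
    Pi.add_apply, Pi.smul_apply, smul_eq_mul]
  ring

end Zhang

theorem si2_local_error_order_three_general
    (d : ℕ) (σ c : ℝ) (hσ : 2 ≤ σ)
    (f : (Fin d → ℝ) → ℝ) (hf : ContDiff ℝ 3 f)
    (α β t : ℝ) (ht : t ∈ Set.Ioo α β) (hI : Set.Ioo α β ⊆ Set.Ioi 0)
    (q p : ℝ → Fin d → ℝ)
    (hq : ∀ s ∈ Set.Ioo α β, ∀ a : Fin d,
      HasDerivAt (fun u => q u a) (-(p s a) / (c * s ^ (2 * σ + 1))) s)
    (hp : ∀ s ∈ Set.Ioo α β, ∀ a : Fin d,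
      HasDerivAt (fun u => p u a)
        (σ ^ 2 * c * s ^ (3 * σ - 1) *
          deriv (fun r : ℝ => f (Function.update (q s) a r)) (q s a)) s) :
    (fun τ : ℝ =>
        ((q (t + τ) - si2Q d σ c t f q p τ, p (t + τ) - si2P d σ c t f q p τ) :
          (Fin d → ℝ) × (Fin d → ℝ)))
      =O[nhdsWithin 0 (Set.Ioi 0)] fun τ : ℝ => τ ^ 3 := by
  have hσ₀ : σ ≠ 0 := (zero_lt_two.trans_le hσ).ne'
  have hf₁ : Differentiable ℝ f := hf.differentiable (by norm_num)
  have hI_nhds : ∀ᶠ s in 𝓝 t, s ∈ Set.Ioo α β := isOpen_Ioo.mem_nhds ht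
  have hq' : ∀ᶠ s in 𝓝 t, HasDerivAt q (deriv (zhangK σ c) s • p s) s := by
    filter_upwards [hI_nhds] with s hs
    rw [(hasDerivAt_zhangK hσ₀ (hI hs)).deriv]
    exact hasDerivAt_pi.mpr fun a => (hq s hs a).congr_deriv (by simp [div_eq_inv_mul])
  have hp' : ∀ᶠ s in 𝓝 t, HasDerivAt p (deriv (zhangV σ c) s • coordGradient f (q s)) s := by
    filter_upwards [hI_nhds] with s hs
    rw [(hasDerivAt_zhangV (hI hs)).deriv]
    refine hasDerivAt_pi.mpr fun a => ?_
    simpa [deriv_comp_update_eq_coordGradient (hf₁ _)] using hp s hs a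
  have h := isBigO_strang_local_error (contDiffAt_zhangK (hI ht)) (contDiffAt_zhangV (hI ht))
    (hf.coordGradient (n := 2)).contDiffAt hq' hp'
  exact (h.mono nhdsWithin_le_nhds).congr_left fun τ => by
    rw [si2Q_eq_strangQ hf₁, si2P_eq_strangP hf₁]

/-- **Second-order (Strang) splitting integrator: local error `O(τ³)`.** Along a
`C³` solution of the reduced Hamiltonian system `q̇ᵃ = -pₐ/(c s^(2σ+1))`,
`ṗₐ = σ² c s^(3σ-1) (∂f/∂qᵃ)(q)`, the one-step Strang update `(q″, p″)` satisfies
`‖(q(t+τ), p(t+τ)) - (q″(τ), p″(τ))‖ = O(τ³)` as `τ → 0⁺`. -/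
theorem si2_local_error_order_three
    (d : ℕ) (hd : 1 ≤ d) (σ c : ℝ) (hσ : 2 ≤ σ) (hc : c ≠ 0)
    (f : (Fin d → ℝ) → ℝ) (hf : ContDiff ℝ 3 f)
    (α β t : ℝ) (ht : t ∈ Set.Ioo α β) (hI : Set.Ioo α β ⊆ Set.Ioi 0)
    (q p : ℝ → Fin d → ℝ)
    (hq3 : ContDiffOn ℝ 3 q (Set.Ioo α β))
    (hp3 : ContDiffOn ℝ 3 p (Set.Ioo α β))
    (hq : ∀ s ∈ Set.Ioo α β, ∀ a : Fin d,
      HasDerivAt (fun u => q u a) (-(p s a) / (c * s ^ (2 * σ + 1))) s)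
    (hp : ∀ s ∈ Set.Ioo α β, ∀ a : Fin d,
      HasDerivAt (fun u => p u a)
        (σ ^ 2 * c * s ^ (3 * σ - 1) *
          deriv (fun r : ℝ => f (Function.update (q s) a r)) (q s a)) s) :
    (fun τ : ℝ =>
        ((q (t + τ) - si2Q d σ c t f q p τ, p (t + τ) - si2P d σ c t f q p τ) :
          (Fin d → ℝ) × (Fin d → ℝ)))
      =O[nhdsWithin 0 (Set.Ioi 0)] fun τ : ℝ => τ ^ 3 :=
  si2_local_error_order_three_general d σ c hσ f hf α β t ht hI q p hq hp
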